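/- arXiv:1312.6235 — 2 statements merged into one kernel-verified Lean document; each statement's English description precedes it below -/
import Mathlib

section
/- Null-criticality via coarea: let G be a positive p-harmonic function in Ω* = Ω\{0} with lim_{x→0} G = ∞ and lim_{x→∞̄} G = 0 (1 < p ≤ n case), and v = G^{(p−1)/p}. Then ∫_{{t₋ < G < t₊}} |∇v|^p dx = c₁ ∫_{t₋}^{t₊} dt/t, which tends to ∞ as t₊ → ∞ or as t₋ → 0. In particular ∫_{Ω*} |∇v|^p dx = ∞. -/
/-!
Since `v = G^q` with `q = (p - 1)/p` and `(q - 1) p = -1`, the chain rule gives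
`|∇v|^p = q^p G⁻¹ |∇G|^p`. Feeding the weight `t ↦ 1/t` on `(t₁, t₂)` into the coarea identity
turns the integral of `|∇v|^p` over the band `{t₁ < G < t₂}` into `q^p c (log t₂ - log t₁)`,
which is unbounded as `t₂ → ∞`; hence so is the integral over the whole of `Ω \ {0}`.
-/

open MeasureTheory Filter Set

abbrev E (n : ℕ) := EuclideanSpace ℝ (Fin n)

theorem integral_Ioo_one_div {a b : ℝ} (ha : 0 < a) (hab : a < b) :
    ∫ t in Ioo a b, 1 / t = Real.log b - Real.log a := by
  rw [← integral_Ioc_eq_integral_Ioo, ← intervalIntegral.integral_of_le hab.le,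
    integral_one_div_of_pos ha (ha.trans hab), Real.log_div (ha.trans hab).ne' ha.ne']

theorem tendsto_integral_Ioo_one_div_atTop {a : ℝ} (ha : 0 < a) :
    Tendsto (fun b => ∫ t in Ioo a b, 1 / t) atTop atTop := by
  refine Tendsto.congr' ?_ (tendsto_atTop_add_const_right atTop (-Real.log a)
    Real.tendsto_log_atTop)
  filter_upwards [eventually_gt_atTop a] with b hab
  rw [integral_Ioo_one_div ha hab, sub_eq_add_neg]

theorem lintegral_ofReal_eq_top_of_forall_le_setIntegral {α : Type*} [MeasurableSpace α]
    {μ : Measure α} {U : Set α} {f : α → ℝ} (hf : ∀ x, 0 ≤ f x)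
    (h : ∀ M : ℝ, ∃ S ⊆ U, M ≤ ∫ x in S, f x ∂μ) :
    ∫⁻ x in U, ENNReal.ofReal (f x) ∂μ = ⊤ := by
  refine ENNReal.eq_top_of_forall_nnreal_le fun r => ?_
  obtain ⟨S, hSU, hrS⟩ := h r
  calc (r : ENNReal) = ENNReal.ofReal r := (ENNReal.ofReal_coe_nnreal).symm
    _ ≤ ENNReal.ofReal (∫ x in S, f x ∂μ) := ENNReal.ofReal_le_ofReal hrS
    _ = ‖∫ x in S, f x ∂μ‖ₑ := (Real.enorm_of_nonneg (integral_nonneg hf)).symm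
    _ ≤ ∫⁻ x in S, ‖f x‖ₑ ∂μ := enorm_integral_le_lintegral_enorm _
    _ = ∫⁻ x in S, ENNReal.ofReal (f x) ∂μ := by simp_rw [Real.enorm_of_nonneg (hf _)]
    _ ≤ ∫⁻ x in U, ENNReal.ofReal (f x) ∂μ := lintegral_mono_set hSU

section Gradient

variable {F : Type*} [NormedAddCommGroup F] [InnerProductSpace ℝ F] [CompleteSpace F]

theorem gradient_rpow_const {G : F → ℝ} {x : F} (hG : DifferentiableAt ℝ G x) (hx : G x ≠ 0)
    (r : ℝ) : gradient (fun y => G y ^ r) x = (r * G x ^ (r - 1)) • gradient G x := by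
  have hv := ((Real.hasDerivAt_rpow_const (p := r) (Or.inl hx)).comp_hasFDerivAt x
    hG.hasFDerivAt).hasGradientAt.gradient
  rw [Function.comp_def, map_smul] at hv
  exact hv

theorem norm_gradient_rpow_pow {G : F → ℝ} {x : F} (hG : DifferentiableAt ℝ G x) (hx : 0 < G x)
    {p : ℝ} (hp : 1 < p) :
    ‖gradient (fun y => G y ^ ((p - 1) / p)) x‖ ^ p
      = ((p - 1) / p) ^ p * (1 / G x * ‖gradient G x‖ ^ p) := by
  set q := (p - 1) / p with hq_def
  have hq : 0 < q := div_pos (by linarith) (by linarith)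
  have hcoef : 0 < q * G x ^ (q - 1) := mul_pos hq (Real.rpow_pos_of_pos hx _)
  have hexp : (q - 1) * p = -1 := by rw [hq_def]; field_simp; ring
  rw [gradient_rpow_const hG hx.ne', norm_smul, Real.norm_of_nonneg hcoef.le,
    Real.mul_rpow hcoef.le (norm_nonneg _), Real.mul_rpow hq.le (Real.rpow_nonneg hx.le _),
    ← Real.rpow_mul hx.le, hexp, Real.rpow_neg_one, one_div, mul_assoc]

end Gradient

theorem setIntegral_inter_preimage_of_coarea {F : Type*} [MeasurableSpace F] {μ : Measure F}
    {U : Set F} {G w : F → ℝ} {c : ℝ} (hU : MeasurableSet U)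
    (hco : ∀ g : ℝ → ℝ, Measurable g → ∫ x in U, g (G x) * w x ∂μ = c * ∫ t in Ioi 0, g t)
    {g : ℝ → ℝ} (hg : Measurable g) {s : Set ℝ} (hs : MeasurableSet s)
    (hUs : MeasurableSet (U ∩ G ⁻¹' s)) :
    ∫ x in U ∩ G ⁻¹' s, g (G x) * w x ∂μ = c * ∫ t in Ioi 0 ∩ s, g t := by
  calc ∫ x in U ∩ G ⁻¹' s, g (G x) * w x ∂μ
      = ∫ x in U, (U ∩ G ⁻¹' s).indicator (fun x => g (G x) * w x) x ∂μ := by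
        rw [setIntegral_indicator hUs, inter_eq_self_of_subset_right inter_subset_left]
    _ = ∫ x in U, s.indicator g (G x) * w x ∂μ := setIntegral_congr_fun hU fun x hx => by
        by_cases hxs : G x ∈ s <;> simp [hx, hxs]
    _ = c * ∫ t in Ioi 0 ∩ s, g t := by rw [hco _ (hg.indicator hs), setIntegral_indicator hs]

theorem setIntegral_norm_gradient_rpow_pow_of_coarea {F : Type*} [NormedAddCommGroup F]
    [InnerProductSpace ℝ F] [CompleteSpace F] [MeasurableSpace F] [BorelSpace F]
    {μ : Measure F} {U : Set F} (hU : IsOpen U) {G : F → ℝ} (hGpos : ∀ x ∈ U, 0 < G x)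
    (hG : DifferentiableOn ℝ G U) {p c : ℝ} (hp : 1 < p)
    (hco : ∀ g : ℝ → ℝ, Measurable g →
      ∫ x in U, g (G x) * ‖gradient G x‖ ^ p ∂μ = c * ∫ t in Ioi 0, g t)
    {t₁ t₂ : ℝ} (ht₁ : 0 < t₁) :
    ∫ x in U ∩ G ⁻¹' Ioo t₁ t₂, ‖gradient (fun y => G y ^ ((p - 1) / p)) x‖ ^ p ∂μ
      = ((p - 1) / p) ^ p * c * ∫ t in Ioo t₁ t₂, 1 / t := by
  have hband : IsOpen (U ∩ G ⁻¹' Ioo t₁ t₂) := hG.continuousOn.isOpen_inter_preimage hU isOpen_Ioo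
  have hIoo : Ioi 0 ∩ Ioo t₁ t₂ = Ioo t₁ t₂ :=
    inter_eq_self_of_subset_right fun t ht => ht₁.trans ht.1
  calc ∫ x in U ∩ G ⁻¹' Ioo t₁ t₂, ‖gradient (fun y => G y ^ ((p - 1) / p)) x‖ ^ p ∂μ
      = ∫ x in U ∩ G ⁻¹' Ioo t₁ t₂, ((p - 1) / p) ^ p * (1 / G x * ‖gradient G x‖ ^ p) ∂μ :=
        setIntegral_congr_fun hband.measurableSet fun x hx => norm_gradient_rpow_pow
          (hG.differentiableAt (hU.mem_nhds hx.1)) (hGpos x hx.1) hp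
    _ = ((p - 1) / p) ^ p * (c * ∫ t in Ioo t₁ t₂, 1 / t) := by
        rw [integral_const_mul, setIntegral_inter_preimage_of_coarea (g := fun t => 1 / t)
          hU.measurableSet hco (measurable_const.div measurable_id) measurableSet_Ioo
          hband.measurableSet, hIoo]
    _ = ((p - 1) / p) ^ p * c * ∫ t in Ioo t₁ t₂, 1 / t := (mul_assoc _ _ _).symm

theorem stmt11_general (n : ℕ) (p : ℝ) (hp1 : 1 < p)
    (Ω : Set (E n)) (hΩ : IsOpen Ω)
    (G : E n → ℝ) (hGpos : ∀ x ∈ Ω \ {0}, 0 < G x)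
    (hG : ContDiffOn ℝ 1 G (Ω \ {0}))
    (c : ℝ) (hc : 0 < c)
    (hcoarea : ∀ g : ℝ → ℝ, Measurable g →
      ∫ x in Ω \ {0}, g (G x) * ‖gradient G x‖ ^ p = c * ∫ t in Set.Ioi (0:ℝ), g t) :
    let v : E n → ℝ := fun x => G x ^ ((p - 1) / p)
    (∀ t1 t2 : ℝ, 0 < t1 → t1 < t2 →
      ∫ x in {x | x ∈ Ω \ {0} ∧ t1 < G x ∧ G x < t2}, ‖gradient v x‖ ^ p
        = ((p - 1) / p) ^ p * c * ∫ t in Set.Ioo t1 t2, 1 / t) ∧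
    (∀ t1 : ℝ, 0 < t1 →
      Filter.Tendsto (fun t2 => ((p - 1) / p) ^ p * c * ∫ t in Set.Ioo t1 t2, 1 / t)
        Filter.atTop Filter.atTop) ∧
    (∫⁻ x in Ω \ {0}, ENNReal.ofReal (‖gradient v x‖ ^ p) = ⊤) := by
  intro v
  have band : ∀ t1 t2 : ℝ, 0 < t1 → t1 < t2 →
      ∫ x in {x | x ∈ Ω \ {0} ∧ t1 < G x ∧ G x < t2}, ‖gradient v x‖ ^ p
        = ((p - 1) / p) ^ p * c * ∫ t in Set.Ioo t1 t2, 1 / t := fun t1 t2 ht1 _ =>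
    setIntegral_norm_gradient_rpow_pow_of_coarea (hΩ.sdiff isClosed_singleton) hGpos
      (hG.differentiableOn one_ne_zero) hp1 hcoarea ht1
  have unbounded : ∀ t1 : ℝ, 0 < t1 →
      Tendsto (fun t2 => ((p - 1) / p) ^ p * c * ∫ t in Set.Ioo t1 t2, 1 / t) atTop atTop :=
    fun t1 ht1 => (tendsto_integral_Ioo_one_div_atTop ht1).const_mul_atTop
      (mul_pos (Real.rpow_pos_of_pos (div_pos (by linarith) (by linarith)) p) hc)
  refine ⟨band, unbounded, lintegral_ofReal_eq_top_of_forall_le_setIntegral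
    (fun x => Real.rpow_nonneg (norm_nonneg _) p) fun M => ?_⟩
  obtain ⟨t2, hM, ht2⟩ := (((unbounded 1 one_pos).eventually_ge_atTop M).and
    (eventually_gt_atTop 1)).exists
  exact ⟨_, fun x hx => hx.1, (band 1 t2 one_pos ht2).symm ▸ hM⟩

/-- Null-criticality via coarea: with the coarea identity (constant `c > 0`) for a
positive `p`-harmonic `G` on `Ω \ {0}` with `G → ∞` at `0` and `G → 0` at infinity in `Ω`,
and `v = G^{(p−1)/p}`, one has
`∫_{t1<G<t2} |∇v|^p = ((p−1)/p)^p c ∫_{t1}^{t2} dt/t → ∞`, and `∫_{Ω\{0}} |∇v|^p = ∞`. -/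
theorem stmt11 (n : ℕ) (p : ℝ) (hp1 : 1 < p) (hpn : p ≤ n)
    (Ω : Set (E n)) (hΩ : IsOpen Ω) (h0 : (0 : E n) ∈ Ω)
    (G : E n → ℝ) (hGpos : ∀ x ∈ Ω \ {0}, 0 < G x)
    (hG : ContDiffOn ℝ 1 G (Ω \ {0}))
    (hG0 : Filter.Tendsto G (nhdsWithin 0 (Ω \ {0})) Filter.atTop)
    (hGinf : Filter.Tendsto (fun x : Ω => G x) (Filter.cocompact Ω) (nhds 0))
    (c : ℝ) (hc : 0 < c)
    (hcoarea : ∀ g : ℝ → ℝ, Measurable g →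
      ∫ x in Ω \ {0}, g (G x) * ‖gradient G x‖ ^ p = c * ∫ t in Set.Ioi (0:ℝ), g t) :
    let v : E n → ℝ := fun x => G x ^ ((p - 1) / p)
    (∀ t1 t2 : ℝ, 0 < t1 → t1 < t2 →
      ∫ x in {x | x ∈ Ω \ {0} ∧ t1 < G x ∧ G x < t2}, ‖gradient v x‖ ^ p
        = ((p - 1) / p) ^ p * c * ∫ t in Set.Ioo t1 t2, 1 / t) ∧
    (∀ t1 : ℝ, 0 < t1 →
      Filter.Tendsto (fun t2 => ((p - 1) / p) ^ p * c * ∫ t in Set.Ioo t1 t2, 1 / t)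
        Filter.atTop Filter.atTop) ∧
    (∫⁻ x in Ω \ {0}, ENNReal.ofReal (‖gradient v x‖ ^ p) = ⊤) :=
  stmt11_general n p hp1 Ω hΩ G hGpos hG c hc hcoarea
end

section
/- Radial supersolution interpolation: let 1 < p < ∞ and suppose v₀, v₁ are positive C² functions of r = |x| on an annulus not containing 0, with nonvanishing derivatives, each satisfying −(p−1)v_j'' − ((n−1)/r) v_j' + (V_j |(log v_j)'|^{2−p}) v_j ≥ 0. Then for α ∈ [0,1], v_α := v₁^α v₀^{1−α} (with (v_α)' nonvanishing) satisfies −(p−1)v_α'' − ((n−1)/r) v_α' + [(1−α)V₀|(log v₀)'|^{2−p} + α V₁|(log v₁)'|^{2−p} − (p−1)α(1−α)|(log(v₀/v₁))'|²] v_α ≥ 0. -/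
/-!
With `ℓ = (log v)'` one has `v''/v = ℓ' + ℓ²`. For `w = v₁^α v₀^(1-α)` both `(log w)'` and
`(log w)''` are the convex combinations of those of `v₁` and `v₀`, so `w''/w` differs from the
convex combination of `v₁''/v₁` and `v₀''/v₀` only through `ℓ_w² - α ℓ₁² - (1-α) ℓ₀²`, which
equals `-α(1-α)(ℓ₀ - ℓ₁)²`. Hence `P w / w + (p-1)α(1-α)(ℓ₀ - ℓ₁)²` is the convex
combination of `P v₁ / v₁` and `P v₀ / v₀`, and the supersolution inequalities add up.
-/

open Filter Topology

section GeometricMean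

variable {f g : ℝ → ℝ} {x α β : ℝ}

theorem hasDerivAt_deriv_div_self {f'' : ℝ} (hf : DifferentiableAt ℝ f x)
    (hf' : HasDerivAt (deriv f) f'' x) (hfx : f x ≠ 0) :
    HasDerivAt (fun y => deriv f y / f y) (f'' / f x - (deriv f x / f x) ^ 2) x := by
  refine (hf'.div hf.hasDerivAt hfx).congr_deriv ?_
  field_simp

theorem hasDerivAt_rpow_mul_rpow {f' g' : ℝ} (hf : HasDerivAt f f' x) (hg : HasDerivAt g g' x)
    (hfx : 0 < f x) (hgx : 0 < g x) :
    HasDerivAt (fun y => f y ^ α * g y ^ β)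
      (f x ^ α * g x ^ β * (α * (f' / f x) + β * (g' / g x))) x := by
  refine ((hf.rpow_const (p := α) (.inl hfx.ne')).mul
    (hg.rpow_const (p := β) (.inl hgx.ne'))).congr_deriv ?_
  rw [Real.rpow_sub_one hfx.ne', Real.rpow_sub_one hgx.ne']
  field_simp

/-- In logarithmic form: `(log w)' = α (log f)' + β (log g)'` and
`(log w)'' = α (log f)'' + β (log g)''` for `w = f ^ α * g ^ β`. -/
theorem deriv_deriv_rpow_mul_rpow (hf : ∀ᶠ y in 𝓝 x, DifferentiableAt ℝ f y)
    (hg : ∀ᶠ y in 𝓝 x, DifferentiableAt ℝ g y) (hf' : DifferentiableAt ℝ (deriv f) x)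
    (hg' : DifferentiableAt ℝ (deriv g) x) (hfx : 0 < f x) (hgx : 0 < g x) :
    deriv (deriv fun y => f y ^ α * g y ^ β) x =
      f x ^ α * g x ^ β * ((α * (deriv f x / f x) + β * (deriv g x / g x)) ^ 2
        + α * (deriv (deriv f) x / f x - (deriv f x / f x) ^ 2)
        + β * (deriv (deriv g) x / g x - (deriv g x / g x) ^ 2)) := by
  have hfpos : ∀ᶠ y in 𝓝 x, 0 < f y := hf.self_of_nhds.continuousAt.eventually (lt_mem_nhds hfx)
  have hgpos : ∀ᶠ y in 𝓝 x, 0 < g y := hg.self_of_nhds.continuousAt.eventually (lt_mem_nhds hgx)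
  have hderiv : deriv (fun y => f y ^ α * g y ^ β) =ᶠ[𝓝 x] fun y =>
      f y ^ α * g y ^ β * (α * (deriv f y / f y) + β * (deriv g y / g y)) := by
    filter_upwards [hf, hg, hfpos, hgpos] with y hfy hgy hfy0 hgy0
    exact (hasDerivAt_rpow_mul_rpow hfy.hasDerivAt hgy.hasDerivAt hfy0 hgy0).deriv
  have hlog : HasDerivAt (fun y => α * (deriv f y / f y) + β * (deriv g y / g y))
      (α * (deriv (deriv f) x / f x - (deriv f x / f x) ^ 2)
        + β * (deriv (deriv g) x / g x - (deriv g x / g x) ^ 2)) x :=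
    ((hasDerivAt_deriv_div_self hf.self_of_nhds hf'.hasDerivAt hfx.ne').const_mul α).add
      ((hasDerivAt_deriv_div_self hg.self_of_nhds hg'.hasDerivAt hgx.ne').const_mul β)
  rw [hderiv.deriv_eq,
    ((hasDerivAt_rpow_mul_rpow hf.self_of_nhds.hasDerivAt hg.self_of_nhds.hasDerivAt hfx hgx).fun_mul
      hlog).deriv]
  ring

end GeometricMean

theorem interpolated_supersolution_nonneg {p c α w w' w'' v₀ v₁ d₀ d₁ s₀ s₁ V₀ V₁ K₀ K₁ : ℝ}
    (hα : α ∈ Set.Icc (0 : ℝ) 1) (hv₀ : 0 < v₀) (hv₁ : 0 < v₁) (hw : 0 < w)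
    (hw' : w' = w * (α * (d₁ / v₁) + (1 - α) * (d₀ / v₀)))
    (hw'' : w'' = w * ((α * (d₁ / v₁) + (1 - α) * (d₀ / v₀)) ^ 2
      + α * (s₁ / v₁ - (d₁ / v₁) ^ 2) + (1 - α) * (s₀ / v₀ - (d₀ / v₀) ^ 2)))
    (hsup₀ : 0 ≤ -(p - 1) * s₀ - c * d₀ + V₀ * K₀ * v₀)
    (hsup₁ : 0 ≤ -(p - 1) * s₁ - c * d₁ + V₁ * K₁ * v₁) :
    0 ≤ -(p - 1) * w'' - c * w'
      + ((1 - α) * V₀ * K₀ + α * V₁ * K₁ - (p - 1) * α * (1 - α) * (d₀ / v₀ - d₁ / v₁) ^ 2) * w := by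
  obtain ⟨hα₀, hα₁⟩ := hα
  -- `(α a + (1 - α) b)² = α a² + (1 - α) b² - α (1 - α) (a - b)²` absorbs the Hardy term
  have hcomb : -(p - 1) * w'' - c * w'
      + ((1 - α) * V₀ * K₀ + α * V₁ * K₁ - (p - 1) * α * (1 - α) * (d₀ / v₀ - d₁ / v₁) ^ 2) * w
      = α * (w / v₁) * (-(p - 1) * s₁ - c * d₁ + V₁ * K₁ * v₁)
        + (1 - α) * (w / v₀) * (-(p - 1) * s₀ - c * d₀ + V₀ * K₀ * v₀) := by
    rw [hw', hw'']
    field_simp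
    ring
  rw [hcomb]
  have := div_pos hw hv₀
  have := div_pos hw hv₁
  have : 0 ≤ 1 - α := by linarith
  positivity

theorem stmt16_general (n : ℕ) (p α : ℝ) (hα : α ∈ Set.Icc (0:ℝ) 1)
    (a b : ℝ)
    (v₀ v₁ V₀ V₁ : ℝ → ℝ)
    (hv₀ : ContDiffOn ℝ 2 v₀ (Set.Ioo a b)) (hv₁ : ContDiffOn ℝ 2 v₁ (Set.Ioo a b))
    (hv₀pos : ∀ r ∈ Set.Ioo a b, 0 < v₀ r) (hv₁pos : ∀ r ∈ Set.Ioo a b, 0 < v₁ r)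
    (hsup₀ : ∀ r ∈ Set.Ioo a b,
      0 ≤ -(p - 1) * deriv (deriv v₀) r - ((n - 1) / r) * deriv v₀ r
        + V₀ r * |deriv v₀ r / v₀ r| ^ (2 - p) * v₀ r)
    (hsup₁ : ∀ r ∈ Set.Ioo a b,
      0 ≤ -(p - 1) * deriv (deriv v₁) r - ((n - 1) / r) * deriv v₁ r
        + V₁ r * |deriv v₁ r / v₁ r| ^ (2 - p) * v₁ r) :
    let vα : ℝ → ℝ := fun r => v₁ r ^ α * v₀ r ^ (1 - α)
    (∀ r ∈ Set.Ioo a b, deriv vα r ≠ 0) →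
    ∀ r ∈ Set.Ioo a b,
      0 ≤ -(p - 1) * deriv (deriv vα) r - ((n - 1) / r) * deriv vα r
        + ((1 - α) * V₀ r * |deriv v₀ r / v₀ r| ^ (2 - p)
            + α * V₁ r * |deriv v₁ r / v₁ r| ^ (2 - p)
            - (p - 1) * α * (1 - α) * (deriv v₀ r / v₀ r - deriv v₁ r / v₁ r) ^ 2)
          * vα r := by
  intro vα _ r hr
  have hreg : ∀ v : ℝ → ℝ, ContDiffOn ℝ 2 v (Set.Ioo a b) →
      (∀ᶠ y in 𝓝 r, DifferentiableAt ℝ v y) ∧ DifferentiableAt ℝ (deriv v) r := fun v hv =>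
    ⟨eventually_of_mem (isOpen_Ioo.mem_nhds hr) fun y hy =>
        (hv.differentiableOn two_ne_zero).differentiableAt (isOpen_Ioo.mem_nhds hy),
      ((hv.deriv_of_isOpen isOpen_Ioo le_rfl).differentiableOn one_ne_zero).differentiableAt
        (isOpen_Ioo.mem_nhds hr)⟩
  obtain ⟨hv₀d, hv₀d'⟩ := hreg v₀ hv₀
  obtain ⟨hv₁d, hv₁d'⟩ := hreg v₁ hv₁
  have h₀ := hv₀pos r hr
  have h₁ := hv₁pos r hr
  exact interpolated_supersolution_nonneg hα h₀ h₁ (by positivity)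
    (hasDerivAt_rpow_mul_rpow hv₁d.self_of_nhds.hasDerivAt hv₀d.self_of_nhds.hasDerivAt h₁ h₀).deriv
    (deriv_deriv_rpow_mul_rpow hv₁d hv₀d hv₁d' hv₀d' h₁ h₀) (hsup₀ r hr) (hsup₁ r hr)

/-- Radial supersolution interpolation: if `v₀, v₁` are positive radial supersolutions of
the linearized radial `p`-Laplace ODE inequalities, then `v_α = v₁^α v₀^{1−α}` satisfies
the interpolated ODE inequality with the extra Hardy term. -/
theorem stmt16 (n : ℕ) (p α : ℝ) (hp : 1 < p) (hα : α ∈ Set.Icc (0:ℝ) 1)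
    (a b : ℝ) (ha : 0 < a) (hab : a < b)
    (v₀ v₁ V₀ V₁ : ℝ → ℝ)
    (hv₀ : ContDiffOn ℝ 2 v₀ (Set.Ioo a b)) (hv₁ : ContDiffOn ℝ 2 v₁ (Set.Ioo a b))
    (hv₀pos : ∀ r ∈ Set.Ioo a b, 0 < v₀ r) (hv₁pos : ∀ r ∈ Set.Ioo a b, 0 < v₁ r)
    (hv₀' : ∀ r ∈ Set.Ioo a b, deriv v₀ r ≠ 0)
    (hv₁' : ∀ r ∈ Set.Ioo a b, deriv v₁ r ≠ 0)
    (hsup₀ : ∀ r ∈ Set.Ioo a b,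
      0 ≤ -(p - 1) * deriv (deriv v₀) r - ((n - 1) / r) * deriv v₀ r
        + V₀ r * |deriv v₀ r / v₀ r| ^ (2 - p) * v₀ r)
    (hsup₁ : ∀ r ∈ Set.Ioo a b,
      0 ≤ -(p - 1) * deriv (deriv v₁) r - ((n - 1) / r) * deriv v₁ r
        + V₁ r * |deriv v₁ r / v₁ r| ^ (2 - p) * v₁ r) :
    let vα : ℝ → ℝ := fun r => v₁ r ^ α * v₀ r ^ (1 - α)
    (∀ r ∈ Set.Ioo a b, deriv vα r ≠ 0) →
    ∀ r ∈ Set.Ioo a b,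
      0 ≤ -(p - 1) * deriv (deriv vα) r - ((n - 1) / r) * deriv vα r
        + ((1 - α) * V₀ r * |deriv v₀ r / v₀ r| ^ (2 - p)
            + α * V₁ r * |deriv v₁ r / v₁ r| ^ (2 - p)
            - (p - 1) * α * (1 - α) * (deriv v₀ r / v₀ r - deriv v₁ r / v₁ r) ^ 2)
          * vα r :=
  stmt16_general n p α hα a b v₀ v₁ V₀ V₁ hv₀ hv₁ hv₀pos hv₁pos hsup₀ hsup₁
end
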